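/- Let 1 ≤ m ≤ p, and suppose u ∈ M_r^{(1)} satisfies v(−t,m)·u = 0 for all 1 ≤ t ≤ p with t ≠ m, and v(−m,m)·u = αm·u for some α ∈ ℂ. Then v(m,m)·(det V_p)·u = 2m²(2α + r − p + 1)·det(V_p^{(m)})·u + (det V_p)·v(m,m)·u, where V_p^{(m)} is obtained from V_p by deleting the m-th row and m-th column. -/

import Mathlib

/-!
Expand `det V_p` by the Leibniz formula; its entries commute, so this can be done in the
commutative subalgebra they generate. Since `v(m,m)` commutes with every `v(−s,−t)` with
`s, t ≠ m`, in the term of a permutation `σ` only the factors in row and column `m` interact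
with `v(m,m)`. If `σ` fixes `m`, the factor `v(−m,−m)` produces `(4α + 2r)m²` times the
remaining product; otherwise the factors `v(−b,−m) v(−a,−m)` produce `2m² v(−b,−a)`, because
`v(−a,m)` and `v(−b,m)` kill `u`. Either way one obtains the term of the permutation
`τ = σ (m a)` (with `σ a = m`) in the Leibniz expansion of the minor `det V_p^{(m)}`. Each `τ`
fixing `m` arises once from `σ = τ` and `p − 1` times, with the opposite sign, from
`σ = τ (m a)`, `a ≠ m`, which gives the coefficient `(4α + 2r)m² − 2(p − 1)m²`.
-/

/-- The contraction scalar `[v^j(n), v^l(t)] = δ_{j,l} δ_{n+t,0} n` of the Heisenberg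
algebra (with `c = 1`). -/
def kapC {d : ℕ} (j l : Fin d) (n t : ℤ) : ℂ :=
  if j = l ∧ n + t = 0 then (n : ℂ) else 0

/-- The scalar `σ(i,k,m,s)` such that `v^{ik}(m,s) = (normally ordered part) + σ(i,k,m,s)`:
it equals `m` when `i = k`, `s = −m` and `m > 0`, and `0` otherwise. -/
def sigC {d : ℕ} (i k : Fin d) (m s : ℤ) : ℂ :=
  if i = k ∧ m + s = 0 ∧ 0 < m then (m : ℂ) else 0

/-- A representation of (the universal enveloping algebra of) the Lie algebra `L_r` in an
associative `ℂ`-algebra `A`: a family of elements `ρ i j m n` playing the role of the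
quadratic elements `v^{ij}(m,n)`, subject to the symmetry relations
`v^{ij}(m,n) = v^{ji}(n,m)` (for `i ≠ j` or `m ≠ −n`), `v^{ii}(m,−m) = v^{ii}(−m,m) + m`,
and the commutation relations of `L_r`:
`[v^{ij}(m,n), v^{kl}(s,t)]_r = [b,d] v^{ik}(m,s) + [b,c] v^{il}(m,t) + [a,d] v^{kj}(s,n)
+ [a,c] v^{lj}(t,n) + (r−1)·(scalar part)`, i.e. the plain Wick-formula commutator of
`U(ĥ)/⟨c−1⟩` with its central (`π₂`) component multiplied by `r`. -/
structure LrAlg (d : ℕ) (r : ℂ) (A : Type*) [Ring A] [Algebra ℂ A] where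
  ρ : Fin d → Fin d → ℤ → ℤ → A
  symm : ∀ (i j : Fin d) (m n : ℤ), i ≠ j ∨ m ≠ -n → ρ i j m n = ρ j i n m
  symm' : ∀ (i : Fin d) (m : ℤ), ρ i i m (-m) = ρ i i (-m) m + algebraMap ℂ A (m : ℂ)
  comm : ∀ (i j k l : Fin d) (m n s t : ℤ),
    ρ i j m n * ρ k l s t - ρ k l s t * ρ i j m n
      = kapC j l n t • ρ i k m s + kapC j k n s • ρ i l m t
        + kapC i l m t • ρ k j s n + kapC i k m s • ρ l j t n
        + algebraMap ℂ A ((r - 1) *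
            (kapC j l n t * sigC i k m s + kapC j k n s * sigC i l m t
              + kapC i l m t * sigC k j s n + kapC i k m s * sigC l j t n))

/-- The determinant of the matrix `(w(−f(q), −f(q')))_{q,q'}` with (pairwise commuting)
entries in a possibly noncommutative ring, expanded as
`Σ_σ sgn(σ) Π_q w(−f(q), −f(σ(q)))`. -/
noncomputable def detOn {A : Type*} [Ring A] {k : ℕ} (w : ℤ → ℤ → A) (f : Fin k → ℤ) : A :=
  ∑ σ : Equiv.Perm (Fin k),
    ((Equiv.Perm.sign σ : ℤˣ) : ℤ) • (List.ofFn fun q => w (-(f q)) (-(f (σ q)))).prod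

open Finset Equiv
open scoped IsMulCommutative

namespace LrAlg

variable {d : ℕ} {r : ℂ} {A : Type*} [Ring A] [Algebra ℂ A] (S : LrAlg d r A)

theorem commute_ρ (i j k l : Fin d) {m n s t : ℤ} (hms : m + s ≠ 0) (hmt : m + t ≠ 0)
    (hns : n + s ≠ 0) (hnt : n + t ≠ 0) : Commute (S.ρ i j m n) (S.ρ k l s t) := by
  have h := S.comm i j k l m n s t
  simp only [kapC, hms, hmt, hns, hnt, and_false, if_false, zero_smul, zero_mul, add_zero,
    map_zero, mul_zero] at h
  exact sub_eq_zero.mp h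

variable (i : Fin d)

theorem ρ_mul_ρ_neg_neg {m s : ℤ} (hsm : s ≠ m) :
    S.ρ i i m m * S.ρ i i (-s) (-m)
      = S.ρ i i (-s) (-m) * S.ρ i i m m + (2 * m : ℂ) • S.ρ i i (-s) m := by
  have h := S.comm i i i i m m (-s) (-m)
  have hsymm : S.ρ i i m (-s) = S.ρ i i (-s) m := S.symm i i m (-s) (Or.inr (by omega))
  simp only [kapC, sigC, show m + -s ≠ 0 by omega, show -s + m ≠ 0 by omega, hsymm, true_and,
    and_false, false_and, if_false, if_true, add_neg_cancel, zero_smul, zero_mul, mul_zero,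
    add_zero, map_zero] at h
  linear_combination (norm := module) h

theorem ρ_mul_ρ_neg_neg_self {m : ℤ} (hm : 0 < m) :
    S.ρ i i m m * S.ρ i i (-m) (-m)
      = S.ρ i i (-m) (-m) * S.ρ i i m m + (4 * m : ℂ) • S.ρ i i (-m) m
        + algebraMap ℂ A (2 * r * m ^ 2) := by
  have h := S.comm i i i i m m (-m) (-m)
  simp only [kapC, sigC, S.symm' i m, hm, neg_add_cancel, add_neg_cancel, and_true, if_true,
    neg_pos, not_lt_of_gt hm, and_false, if_false, mul_zero, add_zero,
    Algebra.algebraMap_eq_smul_one] at h ⊢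
  linear_combination (norm := module) h

theorem ρ_neg_mul_ρ_neg_neg {a m s : ℤ} (hsm : s ≠ m) (ham : a + m ≠ 0) (has : a + s ≠ 0) :
    S.ρ i i (-a) m * S.ρ i i (-s) (-m)
      = S.ρ i i (-s) (-m) * S.ρ i i (-a) m + (m : ℂ) • S.ρ i i (-a) (-s) := by
  have h := S.comm i i i i (-a) m (-s) (-m)
  simp only [kapC, sigC, show m + -s ≠ 0 by omega, show -a + -m ≠ 0 by omega,
    show -a + -s ≠ 0 by omega, add_neg_cancel, true_and, and_true, and_false, false_and,
    if_true, if_false, zero_smul, zero_mul, mul_zero, add_zero, map_zero] at h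
  linear_combination (norm := module) h

def negModeAlg : Subalgebra ℂ A :=
  Algebra.adjoin ℂ (Set.range fun st : ℕ × ℕ => S.ρ i i (-(st.1 + 1 : ℤ)) (-(st.2 + 1 : ℤ)))

instance : IsMulCommutative (S.negModeAlg i) :=
  Algebra.isMulCommutative_adjoin ℂ <| by
    rintro _ ⟨⟨s, t⟩, rfl⟩ _ ⟨⟨s', t'⟩, rfl⟩
    exact (S.commute_ρ i i i i (by omega) (by omega) (by omega) (by omega)).eq

/-- `V_p`, with the index `s ∈ {1, …, p}` shifted to `q = s − 1 : Fin p`. -/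
def vMatrix (p : ℕ) : Matrix (Fin p) (Fin p) (S.negModeAlg i) :=
  Matrix.of fun q q' =>
    ⟨S.ρ i i (-((q : ℕ) + 1 : ℤ)) (-((q' : ℕ) + 1 : ℤ)), Algebra.subset_adjoin ⟨(q, q'), rfl⟩⟩

@[simp]
theorem coe_vMatrix_apply {p : ℕ} (q q' : Fin p) :
    (S.vMatrix i p q q' : A) = S.ρ i i (-((q : ℕ) + 1 : ℤ)) (-((q' : ℕ) + 1 : ℤ)) :=
  rfl

theorem vMatrix_comm {p : ℕ} (q q' : Fin p) : S.vMatrix i p q q' = S.vMatrix i p q' q :=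
  Subtype.ext (S.symm i i _ _ (Or.inr (by omega)))

theorem detOn_eq_coe_det_submatrix {k p : ℕ} (f : Fin k → Fin p) :
    detOn (fun a b => S.ρ i i a b) (fun q => ((f q : ℕ) : ℤ) + 1)
      = ((S.vMatrix i p).submatrix f f).det := by
  rw [← Matrix.det_transpose, Matrix.det_apply, AddSubmonoidClass.coe_finsetSum, detOn]
  refine Finset.sum_congr rfl fun σ _ => ?_
  rw [Units.smul_def, ← List.prod_ofFn]
  push_cast [SubmonoidClass.coe_list_prod, List.map_ofFn]
  rfl

theorem detOn_eq_coe_det (p : ℕ) :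
    detOn (fun a b => S.ρ i i a b) (fun q : Fin p => (q : ℤ) + 1) = (S.vMatrix i p).det := by
  simpa using S.detOn_eq_coe_det_submatrix i (id : Fin p → Fin p)

theorem commute_ρ_coe_prod_vMatrix {ι : Type*} {p : ℕ} {m : ℤ} (T : Finset ι) (f g : ι → Fin p)
    (h : ∀ j ∈ T, ((f j : ℕ) : ℤ) + 1 ≠ m ∧ ((g j : ℕ) : ℤ) + 1 ≠ m) :
    Commute (S.ρ i i m m) ↑(∏ j ∈ T, S.vMatrix i p (f j) (g j)) :=
  Finset.prod_induction _ (fun b : S.negModeAlg i => Commute (S.ρ i i m m) (b : A))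
    (fun _ _ => Commute.mul_right) (Commute.one_right _) fun j hj => by
      obtain ⟨hf, hg⟩ := h j hj
      exact S.commute_ρ i i i i (by omega) (by omega) (by omega) (by omega)

end LrAlg

theorem Equiv.Perm.sum_eq_sum_sum_mul_swap {α N : Type*} [Fintype α] [DecidableEq α]
    [AddCommMonoid N] (F : Perm α → N) (x : α) :
    ∑ σ, F σ = ∑ a, ∑ τ ∈ univ.filter (fun τ : Perm α => τ x = x), F (τ * swap x a) := by
  rw [← Finset.sum_fiberwise univ (fun σ : Perm α => σ⁻¹ x) F]
  refine Finset.sum_congr rfl fun a _ => (Finset.sum_nbij' (· * swap x a) (· * swap x a)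
    ?_ ?_ (fun τ _ => mul_swap_mul_self _ _ τ) (fun σ _ => mul_swap_mul_self _ _ σ)
    (fun _ _ => rfl)).symm
  · intro σ hσ
    simp only [Finset.mem_filter, Finset.mem_univ, true_and] at hσ ⊢
    rw [Perm.inv_eq_iff_eq, Perm.mul_apply, swap_apply_right, hσ]
  · intro σ hσ
    simp only [Finset.mem_filter, Finset.mem_univ, true_and] at hσ ⊢
    rw [Perm.mul_apply, swap_apply_left, ← hσ]
    exact σ.apply_symm_apply x

theorem Matrix.det_submatrix_succAbove_self {R : Type*} [CommRing R] {n : ℕ}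
    (A : Matrix (Fin (n + 1)) (Fin (n + 1)) R) (k : Fin (n + 1)) :
    (A.submatrix k.succAbove k.succAbove).det
      = ∑ τ ∈ univ.filter (fun τ : Perm (Fin (n + 1)) => τ k = k),
          Perm.sign τ • ∏ j ∈ univ.erase k, A (τ j) j := by
  have hadj := adjugate_fin_succ_eq_det_submatrix A k k
  rw [adjugate_apply, Even.neg_one_pow ⟨k, rfl⟩, one_mul] at hadj
  rw [← hadj, det_apply, Finset.sum_filter]
  refine Finset.sum_congr rfl fun σ _ => ?_
  split_ifs with hσ
  · rw [← Finset.mul_prod_erase univ _ (mem_univ k), hσ, updateRow_self, Pi.single_eq_same,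
      one_mul]
    refine congrArg _ (Finset.prod_congr rfl fun j hj => ?_)
    rw [updateRow_ne (fun h => (Finset.ne_of_mem_erase hj) (σ.injective (h.trans hσ.symm)))]
  · refine smul_eq_zero_of_right _ (Finset.prod_eq_zero (mem_univ (σ⁻¹ k)) ?_)
    rw [show σ (σ⁻¹ k) = k from σ.apply_symm_apply k, updateRow_self, Pi.single_eq_of_ne]
    exact fun h => hσ (Perm.inv_eq_iff_eq.mp h).symm

theorem Subalgebra.coe_sum_units_smul_apply {R M ι : Type*} [CommRing R] [AddCommGroup M]
    [Module R M] (B : Subalgebra R (Module.End R M)) (s : Finset ι) (c : ι → ℤˣ) (b : ι → B)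
    (u : M) :
    ((∑ j ∈ s, c j • b j : B) : Module.End R M) u
      = ∑ j ∈ s, (c j : ℤ) • (b j : Module.End R M) u := by
  simp only [AddSubmonoidClass.coe_finsetSum, LinearMap.sum_apply, Units.smul_def]
  rfl

namespace LrAlg

variable {d : ℕ} {r : ℂ} {M : Type*} [AddCommGroup M] [Module ℂ M]
  (S : LrAlg d r (Module.End ℂ M)) (i : Fin d)

def vProd {p : ℕ} (σ : Perm (Fin p)) (T : Finset (Fin p)) : S.negModeAlg i :=
  ∏ j ∈ T, S.vMatrix i p (σ j) j

variable {n : ℕ} {m : ℤ} {k : Fin (n + 1)} (hk : ((k : ℕ) : ℤ) + 1 = m) (u : M)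
include hk

theorem ρ_apply_coe_vProd_of_fixed {α : ℂ} (hu : S.ρ i i (-m) m u = (α * m) • u)
    {τ : Perm (Fin (n + 1))} (hτ : τ k = k) :
    S.ρ i i m m ((S.vProd i τ univ : Module.End ℂ M) u)
      = (S.vProd i τ univ : Module.End ℂ M) (S.ρ i i m m u)
        + ((4 * α + 2 * r) * m ^ 2) • (S.vProd i τ (univ.erase k) : Module.End ℂ M) u := by
  have hsplit : S.vProd i τ univ = S.vProd i τ (univ.erase k) * S.vMatrix i (n + 1) k k := by
    rw [vProd, vProd, ← Finset.prod_erase_mul _ _ (mem_univ k), hτ]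
  have hcomm : Commute (S.ρ i i m m) (S.vProd i τ (univ.erase k) : Module.End ℂ M) :=
    S.commute_ρ_coe_prod_vMatrix i _ _ _ fun j hj => by
      have hjk : j ≠ k := Finset.ne_of_mem_erase hj
      have hτj : τ j ≠ k := fun h => hjk (τ.injective (h.trans hτ.symm))
      exact ⟨fun h => hτj (Fin.ext (by omega)), fun h => hjk (Fin.ext (by omega))⟩
  have hrel := LinearMap.congr_fun (S.ρ_mul_ρ_neg_neg_self i (show 0 < m by omega)) u
  simp only [Module.End.mul_apply, LinearMap.add_apply, LinearMap.smul_apply,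
    Module.algebraMap_end_apply, hu] at hrel
  have hE := LinearMap.congr_fun hcomm.eq ((S.vMatrix i (n + 1) k k : Module.End ℂ M) u)
  simp only [Module.End.mul_apply] at hE
  rw [hsplit, MulMemClass.coe_mul, Module.End.mul_apply, Module.End.mul_apply, hE,
    coe_vMatrix_apply, hk, hrel]
  simp only [map_add, map_smul]
  module

theorem ρ_apply_coe_vProd_mul_swap
    (hu : ∀ t : ℤ, 1 ≤ t → t ≤ ((n + 1 : ℕ) : ℤ) → t ≠ m → S.ρ i i (-t) m u = 0)
    {τ : Perm (Fin (n + 1))} (hτ : τ k = k) {a : Fin (n + 1)} (ha : a ≠ k) :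
    S.ρ i i m m ((S.vProd i (τ * swap k a) univ : Module.End ℂ M) u)
      = (S.vProd i (τ * swap k a) univ : Module.End ℂ M) (S.ρ i i m m u)
        + (2 * m ^ 2 : ℂ) • (S.vProd i τ (univ.erase k) : Module.End ℂ M) u := by
  set b := τ a
  have hb : b ≠ k := fun h => ha (τ.injective (h.trans hτ.symm))
  have hmem : a ∈ univ.erase k := Finset.mem_erase.mpr ⟨ha, mem_univ a⟩
  set Q := S.vProd i τ ((univ.erase k).erase a)
  have hsplit : S.vProd i (τ * swap k a) univ
      = Q * (S.vMatrix i (n + 1) b k * S.vMatrix i (n + 1) a k) := by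
    have hrest : ∏ j ∈ (univ.erase k).erase a, S.vMatrix i (n + 1) ((τ * swap k a) j) j = Q :=
      Finset.prod_congr rfl fun j hj => by
        rw [Perm.mul_apply, swap_apply_of_ne_of_ne (Finset.ne_of_mem_erase
          (Finset.mem_of_mem_erase hj)) (Finset.ne_of_mem_erase hj)]
    rw [vProd, ← Finset.mul_prod_erase _ _ (mem_univ k), ← Finset.mul_prod_erase _ _ hmem, hrest,
      Perm.mul_apply, Perm.mul_apply, swap_apply_left, swap_apply_right, hτ, S.vMatrix_comm i k a]
    ring
  have hsplit' : S.vProd i τ (univ.erase k) = Q * S.vMatrix i (n + 1) b a := by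
    rw [vProd, ← Finset.mul_prod_erase _ _ hmem, mul_comm]
    rfl
  have hcomm : Commute (S.ρ i i m m) (Q : Module.End ℂ M) :=
    S.commute_ρ_coe_prod_vMatrix i _ _ _ fun j hj => by
      have hjk : j ≠ k := Finset.ne_of_mem_erase (Finset.mem_of_mem_erase hj)
      have hτj : τ j ≠ k := fun h => hjk (τ.injective (h.trans hτ.symm))
      exact ⟨fun h => hτj (Fin.ext (by omega)), fun h => hjk (Fin.ext (by omega))⟩
  set sa : ℤ := ((a : ℕ) : ℤ) + 1
  set sb : ℤ := ((b : ℕ) : ℤ) + 1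
  have hsa : sa ≠ m := fun h => ha (Fin.ext (by omega))
  have hsb : sb ≠ m := fun h => hb (Fin.ext (by omega))
  have hxa : S.ρ i i (-sa) m u = 0 := hu sa (by omega) (by omega) hsa
  have hxb : S.ρ i i (-sb) m u = 0 := hu sb (by omega) (by omega) hsb
  have hEa := LinearMap.congr_fun (S.ρ_mul_ρ_neg_neg i hsa) u
  have hEb := LinearMap.congr_fun (S.ρ_mul_ρ_neg_neg i hsb) (S.ρ i i (-sa) (-m) u)
  have hXb := LinearMap.congr_fun
    (S.ρ_neg_mul_ρ_neg_neg i hsa (show sb + m ≠ 0 by omega) (show sb + sa ≠ 0 by omega)) u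
  simp only [Module.End.mul_apply, LinearMap.add_apply, LinearMap.smul_apply, hxa, hxb,
    smul_zero, add_zero, map_zero, zero_add] at hEa hEb hXb
  have hE := LinearMap.congr_fun hcomm.eq (S.ρ i i (-sb) (-m) (S.ρ i i (-sa) (-m) u))
  simp only [Module.End.mul_apply] at hE
  rw [hsplit, hsplit', MulMemClass.coe_mul, MulMemClass.coe_mul, MulMemClass.coe_mul]
  simp only [Module.End.mul_apply, coe_vMatrix_apply, hk]
  rw [hE, hEb, hEa, hXb]
  simp only [map_add, map_smul]
  module

theorem ρ_apply_coe_det {α : ℂ}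
    (hu1 : ∀ t : ℤ, 1 ≤ t → t ≤ ((n + 1 : ℕ) : ℤ) → t ≠ m → S.ρ i i (-t) m u = 0)
    (hu2 : S.ρ i i (-m) m u = (α * m) • u) :
    S.ρ i i m m (((S.vMatrix i (n + 1)).det : Module.End ℂ M) u)
      = (2 * m ^ 2 * (2 * α + r - ((n + 1 : ℕ) : ℂ) + 1)) •
          (((S.vMatrix i (n + 1)).submatrix k.succAbove k.succAbove).det : Module.End ℂ M) u
        + ((S.vMatrix i (n + 1)).det : Module.End ℂ M) (S.ρ i i m m u) := by
  set D : Perm (Fin (n + 1)) → M := fun σ =>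
    S.ρ i i m m ((S.vProd i σ univ : Module.End ℂ M) u)
      - (S.vProd i σ univ : Module.End ℂ M) (S.ρ i i m m u)
  have hdiff : S.ρ i i m m (((S.vMatrix i (n + 1)).det : Module.End ℂ M) u)
      - ((S.vMatrix i (n + 1)).det : Module.End ℂ M) (S.ρ i i m m u)
      = ∑ σ, (Perm.sign σ : ℤ) • D σ := by
    simp only [Matrix.det_apply, Subalgebra.coe_sum_units_smul_apply, map_sum, map_zsmul,
      ← Finset.sum_sub_distrib, ← smul_sub]
    rfl
  have hterm : ∀ a, ∀ τ ∈ univ.filter (fun τ : Perm (Fin (n + 1)) => τ k = k),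
      (Perm.sign (τ * swap k a) : ℤ) • D (τ * swap k a)
        = (if a = k then (4 * α + 2 * r) * m ^ 2 else -(2 * (m : ℂ) ^ 2)) •
          (Perm.sign τ : ℤ) • (S.vProd i τ (univ.erase k) : Module.End ℂ M) u := by
    intro a τ hτ
    rw [Finset.mem_filter] at hτ
    by_cases ha : a = k
    · rw [if_pos ha, ha, swap_self, ← Perm.one_def, mul_one]
      simp only [D, S.ρ_apply_coe_vProd_of_fixed i hk u hu2 hτ.2, add_sub_cancel_left]
      rw [smul_comm]
    · rw [if_neg ha, Perm.sign_mul, Perm.sign_swap (Ne.symm ha)]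
      simp only [D, S.ρ_apply_coe_vProd_mul_swap i hk u hu1 hτ.2 ha, add_sub_cancel_left]
      push_cast
      module
  have hcount : ∀ x y : ℂ, ∑ a : Fin (n + 1), (if a = k then x else y) = x + n * y := by
    intro x y
    rw [Fintype.sum_eq_add_sum_compl k, if_pos rfl,
      Finset.sum_congr rfl fun a ha => if_neg (Finset.mem_compl.mp ha ∘ Finset.mem_singleton.mpr),
      Finset.sum_const, Finset.card_compl, Finset.card_singleton, Fintype.card_fin,
      Nat.add_sub_cancel, nsmul_eq_mul]
  rw [Matrix.det_submatrix_succAbove_self, Subalgebra.coe_sum_units_smul_apply,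
    ← sub_eq_iff_eq_add, hdiff, Perm.sum_eq_sum_sum_mul_swap _ k,
    Finset.sum_congr rfl fun a _ => Finset.sum_congr rfl (hterm a)]
  simp only [← Finset.smul_sum, ← Finset.sum_smul, hcount]
  congr 1
  push_cast
  ring

end LrAlg

/-- let `1 ≤ m ≤ p` and let `u ∈ M_r^{(1)}` satisfy `v(−t,m)·u = 0` for all
`1 ≤ t ≤ p` with `t ≠ m`, and `v(−m,m)·u = αm·u` for some `α ∈ ℂ`.  Then
`v(m,m)·(det V_p)·u = 2m²(2α + r − p + 1)·det(V_p^{(m)})·u + (det V_p)·v(m,m)·u`, where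
`V_p^{(m)}` is `V_p` with the `m`-th row and column deleted (its index set being
`{1,…,p} \ {m}`, realized by the strictly monotone map `Fin (p−1) → ℤ` skipping `m`). -/
theorem stmt_18 (d : ℕ) (hd : 2 ≤ d) (r : ℂ) (M : Type*) [AddCommGroup M] [Module ℂ M]
    (S : LrAlg d r (Module.End ℂ M))
    (p : ℕ) (m : ℤ) (h1 : 1 ≤ m) (h2 : m ≤ (p : ℤ)) (u : M) (α : ℂ)
    (hu1 : ∀ t : ℤ, 1 ≤ t → t ≤ (p : ℤ) → t ≠ m →
      S.ρ (⟨0, by omega⟩ : Fin d) ⟨0, by omega⟩ (-t) m u = 0)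
    (hu2 : S.ρ (⟨0, by omega⟩ : Fin d) ⟨0, by omega⟩ (-m) m u = (α * (m : ℂ)) • u) :
    S.ρ ⟨0, by omega⟩ ⟨0, by omega⟩ m m
        ((detOn (fun a b => S.ρ (⟨0, by omega⟩ : Fin d) ⟨0, by omega⟩ a b)
            (fun q : Fin p => (q : ℤ) + 1)) u)
      = (2 * (m : ℂ) ^ 2 * (2 * α + r - (p : ℂ) + 1)) •
          ((detOn (fun a b => S.ρ (⟨0, by omega⟩ : Fin d) ⟨0, by omega⟩ a b)
              (fun q : Fin (p - 1) => if (q : ℤ) + 1 < m then (q : ℤ) + 1 else (q : ℤ) + 2)) u)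
        + (detOn (fun a b => S.ρ (⟨0, by omega⟩ : Fin d) ⟨0, by omega⟩ a b)
            (fun q : Fin p => (q : ℤ) + 1))
            (S.ρ ⟨0, by omega⟩ ⟨0, by omega⟩ m m u) := by
  obtain ⟨n, rfl⟩ : ∃ n, p = n + 1 := ⟨p - 1, by omega⟩
  set k : Fin (n + 1) := ⟨(m - 1).toNat, by omega⟩
  have hk : ((k : ℕ) : ℤ) + 1 = m := by simp only [k]; omega
  have hskip : (fun q : Fin n => if (q : ℤ) + 1 < m then (q : ℤ) + 1 else (q : ℤ) + 2)
      = fun q : Fin n => ((k.succAbove q : ℕ) : ℤ) + 1 := by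
    funext q
    simp only [Fin.succAbove, Fin.lt_def, Fin.val_castSucc, k]
    split_ifs <;> simp only [Fin.val_succ, Fin.val_castSucc] <;> omega
  rw [Nat.add_sub_cancel, hskip, LrAlg.detOn_eq_coe_det, LrAlg.detOn_eq_coe_det_submatrix]
  exact S.ρ_apply_coe_det _ hk u hu1 hu2
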